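/- arXiv:1103.2511 — 3 statements merged into one kernel-verified Lean document; each statement's English description precedes it below -/
import Mathlib

section
/- If X is an 𝒳-projective complex, then each component X_n is an 𝒳-projective R-module. -/
open CategoryTheory CategoryTheory.Limits

/-- The category of cochain complexes of `R`-modules indexed by `ℤ`. -/
abbrev Cx (R : Type) [Ring R] := CochainComplex (ModuleCat.{0} R) ℤ

variable {R : Type} [Ring R]

/-- `C` is an `𝒳`-complex: every component lies in the class `𝒳`. -/
def IsXCx (𝒳 : Set (ModuleCat.{0} R)) (C : Cx R) : Prop := ∀ n : ℤ, C.X n ∈ 𝒳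

/-- `P` is an `𝒳`-projective module: maps from `P` lift along surjections with kernel in `𝒳`. -/
def XProjMod (𝒳 : Set (ModuleCat.{0} R)) (P : ModuleCat.{0} R) : Prop :=
  ∀ (A B : ModuleCat.{0} R) (p : A ⟶ B), Function.Surjective p →
    ModuleCat.of R (LinearMap.ker p.hom) ∈ 𝒳 →
    ∀ h : P ⟶ B, ∃ g : P ⟶ A, g ≫ p = h

/-- `E` is an `𝒳`-injective module: maps into `E` extend along injections with cokernel in `𝒳`. -/
def XInjMod (𝒳 : Set (ModuleCat.{0} R)) (E : ModuleCat.{0} R) : Prop :=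
  ∀ (A B : ModuleCat.{0} R) (i : A ⟶ B), Function.Injective i →
    ModuleCat.of R (↥B ⧸ LinearMap.range i.hom) ∈ 𝒳 →
    ∀ f : A ⟶ E, ∃ g : B ⟶ E, i ≫ g = f

/-- `C` is an `𝒳`-projective complex: chain maps from `C` lift along surjective chain maps
whose kernel complex has all components in `𝒳`. -/
def XProjCx (𝒳 : Set (ModuleCat.{0} R)) (C : Cx R) : Prop :=
  ∀ (A B : Cx R) (φ : A ⟶ B), (∀ n, Function.Surjective (φ.f n)) →
    (∀ n, ModuleCat.of R (LinearMap.ker (φ.f n).hom) ∈ 𝒳) →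
    ∀ f : C ⟶ B, ∃ h : C ⟶ A, h ≫ φ = f

/-- `C` is an `𝒳`-injective complex: chain maps into `C` extend along injective chain maps
whose cokernel complex has all components in `𝒳`. -/
def XInjCx (𝒳 : Set (ModuleCat.{0} R)) (C : Cx R) : Prop :=
  ∀ (A B : Cx R) (φ : A ⟶ B), (∀ n, Function.Injective (φ.f n)) →
    (∀ n, ModuleCat.of R (↥(B.X n) ⧸ LinearMap.range (φ.f n).hom) ∈ 𝒳) →
    ∀ f : A ⟶ C, ∃ g : B ⟶ C, φ ≫ g = f

/-- The complex `... → 0 → A →(f) B → 0 → ...` with `A` in degree 0 and `B` in degree 1. -/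
noncomputable def DblMap {A B : ModuleCat.{0} R} (f : A ⟶ B) : Cx R where
  X n := if n = 0 then A else if n = 1 then B else ModuleCat.of R PUnit
  d i j :=
    if h : i = 0 ∧ j = 1 then
      eqToHom (by rw [h.1]; simp) ≫ f ≫ eqToHom (by rw [h.2]; simp)
    else 0
  shape i j hij := by
    try dsimp only
    rw [dif_neg]
    rintro ⟨rfl, rfl⟩
    exact hij rfl
  d_comp_d' i j k _ _ := by
    try dsimp only
    by_cases h : i = 0 ∧ j = 1
    · obtain ⟨rfl, rfl⟩ := h
      rw [dif_neg (show ¬((1:ℤ) = 0 ∧ k = 1) by omega), comp_zero]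
    · rw [dif_neg h, zero_comp]

/-- The complex `... → 0 → P →(id) P → 0 → ...` (`P` in degrees 0 and 1, identity differential). -/
noncomputable def Dbl (P : ModuleCat.{0} R) : Cx R := DblMap (𝟙 P)

/-- Membership in `ε₁`: exact complexes all of whose kernels lie in `𝒳`. -/
def Eps1 (𝒳 : Set (ModuleCat.{0} R)) (E : Cx R) : Prop :=
  (∀ n : ℤ, E.ExactAt n) ∧ ∀ n : ℤ, ModuleCat.of R (LinearMap.ker (E.d n (n+1)).hom) ∈ 𝒳

/-- `Ext¹(A, C) = 0` in the category of complexes: every short exact sequence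
`0 → C → W → A → 0` of complexes splits. -/
def Ext1IsZero (A C : Cx R) : Prop :=
  ∀ (W : Cx R) (i : C ⟶ W) (p : W ⟶ A),
    (∀ n, Function.Injective (i.f n)) → (∀ n, Function.Surjective (p.f n)) →
    (∀ n, LinearMap.range (i.f n).hom = LinearMap.ker (p.f n).hom) →
    ∃ r : W ⟶ C, i ≫ r = 𝟙 C

/-- A complex is bounded if its components vanish outside finitely many degrees. -/
def Bounded (C : Cx R) : Prop := ∃ a b : ℤ, ∀ n : ℤ, (n < a ∨ b < n) → Limits.IsZero (C.X n)

/-!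
Maps `X_n ⟶ B` extend to chain maps from `X` into a complex built from `B` alone, and a surjection
`A ⟶ B` induces a degreewise surjection between such complexes whose kernels are all `ker p`.
Lifting the extended chain map and reading off degree `n` lifts the original map.
-/

section ConstDisk

variable {C : Type*} [Category C] [HasZeroMorphisms C]

/-- Unlike the disk `M → M` concentrated in degrees `n - 1, n`, this has `M` in every degree, so the
map induced by `p` has kernel `ker p` in every degree and `𝒳` need not contain the zero module. -/
def constDisk (n : ℤ) (M : C) : CochainComplex C ℤ where
  X _ := M
  d i j := if i = n - 1 ∧ j = n then 𝟙 M else 0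
  shape i j hij := if_neg fun h => hij (by simp only [ComplexShape.up_Rel]; omega)
  d_comp_d' i j k _ _ := by
    by_cases h : i = n - 1 ∧ j = n
    · rw [if_neg (show ¬(j = n - 1 ∧ k = n) by omega), comp_zero]
    · rw [if_neg h, zero_comp]

def constDiskMap (n : ℤ) {A B : C} (p : A ⟶ B) : constDisk n A ⟶ constDisk n B where
  f _ := p
  comm' i j _ := by
    dsimp only [constDisk]
    split <;> simp

def toConstDisk (X : CochainComplex C ℤ) (n : ℤ) {B : C} (h : X.X n ⟶ B) :
    X ⟶ constDisk n B where
  f m := if hm : m = n then (X.XIsoOfEq hm).hom ≫ h else X.d m n ≫ h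
  comm' i j hij := by
    dsimp only [constDisk]
    by_cases hin : i = n - 1 ∧ j = n
    · obtain ⟨rfl, rfl⟩ := hin
      simp
    · have hjn : j ≠ n := fun hj => hin ⟨by simp only [ComplexShape.up_Rel] at hij; omega, hj⟩
      rw [if_neg hin, comp_zero, dif_neg hjn, X.d_comp_d_assoc, zero_comp]

@[simp]
lemma toConstDisk_f_self (X : CochainComplex C ℤ) (n : ℤ) {B : C} (h : X.X n ⟶ B) :
    (toConstDisk X n h).f n = h := by
  simp only [toConstDisk, dite_true, HomologicalComplex.XIsoOfEq_rfl, Iso.refl_hom]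
  exact Category.id_comp h

end ConstDisk

/-- Each component of an `𝒳`-projective complex is an `𝒳`-projective module. -/
theorem stmt6 (𝒳 : Set (ModuleCat.{0} R)) (X : Cx R) (hX : XProjCx 𝒳 X) :
    ∀ n : ℤ, XProjMod 𝒳 (X.X n) := by
  intro n A B p hp hker h
  obtain ⟨g, hg⟩ := hX _ _ (constDiskMap n p) (fun _ => hp) (fun _ => hker) (toConstDisk X n h)
  exact ⟨g.f n, (congr_arg (fun φ => φ.f n) hg).trans (toConstDisk_f_self X n h)⟩
end

section
/- There exists a complex X with all components 𝒳-injective modules that is not an 𝒳-injective complex. Specifically, if R is an injective module over itself, f : R → R is an injective R-homomorphism, and g : R → R is a nonzero homomorphism with g ∘ f = 0, then the two-term complex 0 → R →(f) R → 0 with injective (hence 𝒳-injective) components fails to be an 𝒳-injective complex. -/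
open CategoryTheory CategoryTheory.Limits

variable {R : Type} [Ring R]

/-!
The components of `0 → R →(f) R → 0` are `R` and `0`, both injective. For the complex, the map
`(0 → R) ⟶ (R →(f) R)` that is the identity in degree 1 would extend along the degreewise
injective inclusion `(0 → R) ⟶ (R →(id) R)`. Commutativity of the extension in degree 0 then
makes its degree-0 component a section of `f`, so `f` is surjective and `g = 0` from `g ∘ f = 0`.
-/

namespace DblMap

variable {A B A' B' : ModuleCat.{0} R}

lemma X_of_ne (f : A ⟶ B) {n : ℤ} (h₀ : n ≠ 0) (h₁ : n ≠ 1) :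
    (DblMap f).X n = ModuleCat.of R PUnit := by
  simp [DblMap, h₀, h₁]

lemma d_eq_zero_of_ne (f : A ⟶ B) {i : ℤ} (hi : i ≠ 0) (j : ℤ) : (DblMap f).d i j = 0 :=
  dif_neg fun h => hi h.1

noncomputable def homMk (f : A ⟶ B) (f' : A' ⟶ B') (α : A ⟶ A') (β : B ⟶ B')
    (h : f ≫ β = α ≫ f') : DblMap f ⟶ DblMap f' where
  f n := match n with
    | 0 => α
    | 1 => β
    | _ => 0
  comm' i j hij := by
    obtain rfl : i + 1 = j := hij
    by_cases hi : i = 0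
    · subst hi
      exact h.symm
    · rw [d_eq_zero_of_ne f hi, d_eq_zero_of_ne f' hi, zero_comp, comp_zero]

lemma injective_homMk_f_of_subsingleton (f : A ⟶ B) (f' : A' ⟶ B') (α : A ⟶ A') (β : B ⟶ B')
    (h : f ≫ β = α ≫ f') [Subsingleton A] (hβ : Function.Injective β) (n : ℤ) :
    Function.Injective ((homMk f f' α β h).f n) := by
  by_cases h₁ : n = 1
  · subst h₁
    exact hβ
  have : Subsingleton ((DblMap f).X n) := by
    by_cases h₀ : n = 0
    · subst h₀
      assumption
    · rw [X_of_ne f h₀ h₁]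
      infer_instance
  exact Function.injective_of_subsingleton _

end DblMap

lemma xInjMod_of_injective (𝒳 : Set (ModuleCat.{0} R)) {E : ModuleCat.{0} R}
    (hE : Module.Injective R E) : XInjMod 𝒳 E := by
  intro _ _ i hi _ f
  obtain ⟨g, hg⟩ := hE.out i.hom hi f.hom
  exact ⟨ModuleCat.ofHom g, ModuleCat.hom_ext (LinearMap.ext hg)⟩

lemma xInjMod_of_subsingleton (𝒳 : Set (ModuleCat.{0} R)) (E : ModuleCat.{0} R)
    [Subsingleton E] : XInjMod 𝒳 E :=
  fun _ _ _ _ _ _ => ⟨0, by ext; exact Subsingleton.elim _ _⟩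

lemma xInjMod_dblMap_X {𝒳 : Set (ModuleCat.{0} R)} {A B : ModuleCat.{0} R} (f : A ⟶ B)
    (hA : XInjMod 𝒳 A) (hB : XInjMod 𝒳 B) (n : ℤ) : XInjMod 𝒳 ((DblMap f).X n) := by
  by_cases h₀ : n = 0
  · subst h₀
    exact hA
  by_cases h₁ : n = 1
  · subst h₁
    exact hB
  rw [DblMap.X_of_ne f h₀ h₁]
  exact xInjMod_of_subsingleton 𝒳 _

lemma exists_section_of_xInjCx_dblMap {A B : ModuleCat.{0} R} (f : A ⟶ B)
    (hf : XInjCx Set.univ (DblMap f)) : ∃ s : B ⟶ A, s ≫ f = 𝟙 B := by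
  let ι := DblMap.homMk (0 : ModuleCat.of R PUnit ⟶ B) (𝟙 B) 0 (𝟙 B) (by simp)
  let φ := DblMap.homMk (0 : ModuleCat.of R PUnit ⟶ B) f 0 (𝟙 B) (by simp)
  obtain ⟨ρ, hρ⟩ := hf _ _ ι
    (DblMap.injective_homMk_f_of_subsingleton _ _ _ _ _ fun _ _ h => h)
    (fun _ => Set.mem_univ _) φ
  have hρ₁ : ρ.f 1 = 𝟙 B :=
    (Category.id_comp _).symm.trans (congrArg (fun τ => HomologicalComplex.Hom.f τ 1) hρ)
  refine ⟨ρ.f 0, ?_⟩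
  have hcomm : ρ.f 0 ≫ f = 𝟙 B ≫ ρ.f 1 := ρ.comm 0 1
  rw [hρ₁] at hcomm
  exact hcomm.trans (Category.id_comp _)

theorem stmt7_general (hR : Module.Injective R R) (f g : R →ₗ[R] R)
    (hg : g ≠ 0) (hgf : g ∘ₗ f = 0) :
    (∀ n : ℤ, XInjMod (Set.univ : Set (ModuleCat.{0} R))
      ((DblMap (ModuleCat.ofHom f)).X n)) ∧
    ¬ XInjCx (Set.univ : Set (ModuleCat.{0} R)) (DblMap (ModuleCat.ofHom f)) := by
  have hRX := xInjMod_of_injective Set.univ (E := ModuleCat.of R R) hR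
  refine ⟨xInjMod_dblMap_X _ hRX hRX, fun hXI => hg ?_⟩
  obtain ⟨s, hs⟩ := exists_section_of_xInjCx_dblMap _ hXI
  have hf_surj : Function.Surjective f := fun y =>
    ⟨s y, congrArg (fun φ => φ.hom y) hs⟩
  exact (LinearMap.cancel_right hf_surj).mp (hgf.trans (LinearMap.zero_comp f).symm)

/-- If `R` is self-injective, `f : R → R` is injective and `g : R → R` is nonzero
with `g ∘ f = 0`, then the complex `0 → R →(f) R → 0` has all components `𝒳`-injective
(`𝒳 = ` all modules) but is not an `𝒳`-injective complex. -/
theorem stmt7 (hR : Module.Injective R R) (f g : R →ₗ[R] R)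
    (hf : Function.Injective f) (hg : g ≠ 0) (hgf : g ∘ₗ f = 0) :
    (∀ n : ℤ, XInjMod (Set.univ : Set (ModuleCat.{0} R))
      ((DblMap (ModuleCat.ofHom f)).X n)) ∧
    ¬ XInjCx (Set.univ : Set (ModuleCat.{0} R)) (DblMap (ModuleCat.ofHom f)) :=
  stmt7_general hR f g hg hgf
end

section
/- Let X and I be complexes of R-modules. If Ext^1(X, I[n]) = 0 in the category of complexes for all integers n, then the Hom-complex 𝓗om(X, I) is exact. -/
open CategoryTheory CategoryTheory.Limits

variable {R : Type} [Ring R]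

/-!
A cocycle `z` of degree `n + 1` in `𝓗om(X, I)` is, after shifting, a chain map
`ψ : X⟦-1⟧ ⟶ I⟦n⟧`. Its mapping cone sits in a degreewise split sequence
`0 → I⟦n⟧ → cone ψ → X → 0`, which splits because `Ext¹(X, I⟦n⟧) = 0`. Composing the canonical
nullhomotopy of `ψ ≫ inr ψ` with a retraction of `inr ψ` shows that `ψ` is nullhomotopic,
i.e. that `z` is a coboundary.
-/

open CochainComplex HomComplex

namespace CochainComplex

variable {C : Type*} [Category C] [Preadditive C]

namespace mappingCone

variable [HasBinaryBiproducts C]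

noncomputable def homotopyZeroOfRetraction {K L : CochainComplex C ℤ} (φ : K ⟶ L)
    (r : mappingCone φ ⟶ L) (hr : inr φ ≫ r = 𝟙 L) : Homotopy φ 0 :=
  (Homotopy.ofEq (by rw [Category.assoc, hr, Category.comp_id]) :
    Homotopy φ ((φ ≫ inr φ) ≫ r)).trans
    (((HomologicalComplex.homotopyCofiber.inrCompHomotopy φ
      fun j => ⟨j - 1, by simp⟩).compRight r).trans (Homotopy.ofEq zero_comp))

variable {X L : CochainComplex C ℤ} (φ : X⟦(-1 : ℤ)⟧ ⟶ L)

/-- Unshifting `fst φ` gives a map to `X` itself rather than to `X⟦-1⟧⟦1⟧`, which spares an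
isomorphism `X⟦-1⟧⟦1⟧ ≅ X`. -/
noncomputable def projUnshift : mappingCone φ ⟶ X :=
  Cocycle.homOf ((fst φ).rightUnshift 0 (by omega))

lemma projUnshift_f (k : ℤ) : (projUnshift φ).f k =
    (fst φ).1.v k (k + 1) rfl ≫ (X.shiftFunctorObjXIso (-1) (k + 1) k (by omega)).hom := by
  rw [projUnshift, Cocycle.homOf_f, Cocycle.rightUnshift_coe,
    Cochain.rightUnshift_v _ 0 (by omega) k k (add_zero k) (k + 1) rfl]

lemma inr_f_projUnshift_f (k : ℤ) : (inr φ).f k ≫ (projUnshift φ).f k = 0 := by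
  rw [projUnshift_f, ← Category.assoc, inr_f_fst_v, zero_comp]

lemma inl_v_projUnshift_f (k : ℤ) :
    ((X.shiftFunctorObjXIso (-1) (k + 1) k (by omega)).inv ≫ (inl φ).v (k + 1) k (by omega)) ≫
      (projUnshift φ).f k = 𝟙 (X.X k) := by
  rw [projUnshift_f, Category.assoc, inl_v_fst_v_assoc, Iso.inv_hom_id]

lemma snd_v_inr_f_add_projUnshift_f_inl_v (k : ℤ) :
    (snd φ).v k k (add_zero k) ≫ (inr φ).f k + (projUnshift φ).f k ≫
      (X.shiftFunctorObjXIso (-1) (k + 1) k (by omega)).inv ≫ (inl φ).v (k + 1) k (by omega) =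
      𝟙 ((mappingCone φ).X k) := by
  rw [projUnshift_f, Category.assoc, Iso.hom_inv_id_assoc, add_comm]
  exact id_X φ k (k + 1) rfl

noncomputable def shortComplexUnshift : ShortComplex (CochainComplex C ℤ) :=
  ShortComplex.mk (inr φ) (projUnshift φ) (by ext k; exact inr_f_projUnshift_f φ k)

noncomputable def shortComplexUnshiftSplitting (k : ℤ) :
    ((shortComplexUnshift φ).map (HomologicalComplex.eval C _ k)).Splitting where
  r := (snd φ).v k k (add_zero k)
  s := (X.shiftFunctorObjXIso (-1) (k + 1) k (by omega)).inv ≫ (inl φ).v (k + 1) k (by omega)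
  f_r := inr_f_snd_v φ k
  s_g := inl_v_projUnshift_f φ k
  id := snd_v_inr_f_add_projUnshift_f_inl_v φ k

end mappingCone

namespace HomComplex.Cocycle

variable {K L : CochainComplex C ℤ}

lemma mem_coboundaries_of_homotopy_zero {n : ℤ} (z : Cocycle K L n)
    (h : Nonempty (Homotopy (equivHomShift.symm z) 0)) : z ∈ coboundaries K L n := by
  rw [← CohomologyClass.toHom_mk_eq_zero_iff, CohomologyClass.toHom_mk,
    HomotopyCategory.quotient_map_eq_zero_iff]
  exact h

lemma mem_coboundaries_of_leftShift {n : ℤ} (z : Cocycle K L n) (a n' : ℤ) (hn' : n + a = n')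
    (h : z.leftShift a n' hn' ∈ coboundaries (K⟦a⟧) L n') : z ∈ coboundaries K L n := by
  obtain ⟨m', hm', β, hβ⟩ := h
  refine (mem_coboundaries_iff z (n - 1) (by omega)).2
    ⟨a.negOnePow • β.leftUnshift (n - 1) (by omega), ?_⟩
  rw [δ_units_smul, Cochain.δ_leftUnshift β (n - 1) _ n n' hn', hβ, smul_smul,
    Int.units_mul_self, one_smul, leftShift_coe, Cochain.leftUnshift_leftShift]

end HomComplex.Cocycle

end CochainComplex

lemma Ext1IsZero.exists_retraction {S : ShortComplex (Cx R)}
    (hS : ∀ k, (S.map (HomologicalComplex.eval _ _ k)).ShortExact)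
    (h : Ext1IsZero S.X₃ S.X₁) : ∃ r : S.X₂ ⟶ S.X₁, S.f ≫ r = 𝟙 S.X₁ :=
  h S.X₂ S.f S.g (fun k => (hS k).moduleCat_injective_f) (fun k => (hS k).moduleCat_surjective_g)
    (fun k => (hS k).exact.moduleCat_range_eq_ker)

lemma Ext1IsZero.nonempty_homotopy_zero {X L : Cx R} (h : Ext1IsZero X L)
    (φ : X⟦(-1 : ℤ)⟧ ⟶ L) : Nonempty (Homotopy φ 0) := by
  obtain ⟨r, hr⟩ := Ext1IsZero.exists_retraction
    (fun k => (mappingCone.shortComplexUnshiftSplitting φ k).shortExact) h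
  exact ⟨mappingCone.homotopyZeroOfRetraction φ r hr⟩

open CochainComplex.HomComplex in
/-- If `Ext¹(X, I[n]) = 0` in the category of complexes for all `n`, then the
internal Hom-complex `𝓗om(X, I)` is exact. -/
theorem stmt12 (X I : Cx R) (h : ∀ n : ℤ, Ext1IsZero X (I⟦n⟧)) :
    ∀ (n : ℤ) (z : Cochain X I (n + 1)), δ (n + 1) (n + 2) z = 0 →
      ∃ y : Cochain X I n, δ n (n + 1) y = z := by
  intro n z hz
  set Z : Cocycle X I (n + 1) := Cocycle.mk z (n + 2) (by omega) hz
  have hZ : Z.leftShift (-1) n (by omega) ∈ coboundaries _ _ n :=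
    Cocycle.mem_coboundaries_of_homotopy_zero _ ((h n).nonempty_homotopy_zero _)
  exact (mem_coboundaries_iff Z n rfl).1 (Cocycle.mem_coboundaries_of_leftShift Z _ _ _ hZ)
end
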